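/- arXiv:math/0009168 — 3 statements merged into one kernel-verified Lean document; each statement's English description precedes it below -/
import Mathlib

section
/- Let V be a graded k-module that is free of finite type and concentrated in degrees ≥ 1. Then the canonical map Φ : TC(V^∨) → (TA V)^∨ from the tensor coalgebra on the dual of V to the graded dual of the tensor algebra on V is an isomorphism of graded Hopf algebras, where TA V carries the diagonal making elements of V primitive and TC(V^∨) carries the shuffle product. -/
/-!
STATEMENT 3.  Let `V` be a graded `k`-module, free of finite type and
concentrated in degrees `≥ 1`; we model `V` as the free module on a basis `B`
with `deg : B → ℤ`, `deg b ≥ 1`, with finitely many basis elements in each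
degree.  The tensor algebra `TA V` (free on words, concatenation product,
diagonal making `V` primitive) and the tensor coalgebra `TC(V^∨)` on the dual
(deconcatenation coproduct, shuffle product) are modeled on words `List B`;
by finite type, `V^∨` has dual basis `B` again.  The canonical map
`Φ : TC(V^∨) → (TA V)^∨` is an isomorphism of graded Hopf algebras.  This is
expressed by: (i) in each total degree, `Φ` (inclusion of finitely supported
coefficient families into all coefficient families) is bijective; (ii) the
shuffle product is dual to the primitive diagonal of `TA V`; (iii) the
deconcatenation coproduct is dual to the concatenation product.
-/

def sgn (m : ℤ) : ℤ := if Even m then 1 else -1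

def degW {B : Type*} (deg : B → ℤ) (l : List B) : ℤ := (l.map deg).sum

noncomputable def shuffle (k : Type*) {B : Type*} [CommRing k] (deg : B → ℤ) :
    List B → List B → (List B →₀ k)
  | [], l => Finsupp.single l 1
  | a :: x, [] => Finsupp.single (a :: x) 1
  | a :: x, b :: y =>
      (shuffle k deg x (b :: y)).mapDomain (a :: ·)
      + sgn (deg b * (deg a + degW deg x)) •
          (shuffle k deg (a :: x) y).mapDomain (b :: ·)
  termination_by x y => x.length + y.length

noncomputable def deconcat (k : Type*) {B : Type*} [CommRing k] :
    List B → ((List B × List B) →₀ k)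
  | [] => Finsupp.single ([], []) 1
  | a :: l => Finsupp.single ([], a :: l) 1
      + (deconcat k l).mapDomain fun p => (a :: p.1, p.2)

/-- The diagonal of the tensor algebra `TA V` making the elements of `V`
primitive, on a basis word (with Koszul signs). -/
noncomputable def primDiag (k : Type*) {B : Type*} [CommRing k] (deg : B → ℤ) :
    List B → ((List B × List B) →₀ k)
  | [] => Finsupp.single ([], []) 1
  | a :: l => (primDiag k deg l).mapDomain (fun p => (a :: p.1, p.2))
      + (primDiag k deg l).sum fun p c =>
          (sgn (deg a * degW deg p.1) * c) • Finsupp.single (p.1, a :: p.2) 1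

section Aux
variable {k B : Type*} [CommRing k] [DecidableEq B] (deg : B → ℤ)

lemma degW_nil : degW deg ([] : List B) = 0 := rfl
lemma degW_cons (a : B) (l : List B) : degW deg (a :: l) = deg a + degW deg l := by
  simp [degW]

lemma consInj (a : B) : Function.Injective (fun p : List B × List B => (a :: p.1, p.2)) := by
  rintro ⟨p1, p2⟩ ⟨q1, q2⟩ h
  simpa [Prod.ext_iff] using h

lemma mapP_nil (F : (List B × List B) →₀ k) (a : B) (y : List B) :
    (F.mapDomain fun p => (a :: p.1, p.2)) ([], y) = 0 := by
  apply Finsupp.mapDomain_notin_range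
  rintro ⟨⟨p1, p2⟩, h⟩
  simp [Prod.ext_iff] at h

lemma mapP_cons (F : (List B × List B) →₀ k) (a c : B) (x y : List B) :
    (F.mapDomain fun p => (a :: p.1, p.2)) (c :: x, y)
      = if c = a then F (x, y) else 0 := by
  split
  · next h =>
    subst h
    exact Finsupp.mapDomain_apply (consInj c) F (x, y)
  · next h =>
    apply Finsupp.mapDomain_notin_range
    rintro ⟨⟨p1, p2⟩, hp⟩
    simp [Prod.ext_iff] at hp
    exact h hp.1.1.symm

lemma mapL_nil (f : (List B) →₀ k) (a : B) :
    (f.mapDomain (a :: ·)) [] = 0 :=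
  Finsupp.mapDomain_notin_range _ _ (by rintro ⟨p, hp⟩; simp at hp)

lemma mapL_cons (f : (List B) →₀ k) (a c : B) (l : List B) :
    (f.mapDomain (a :: ·)) (c :: l) = if c = a then f l else 0 := by
  split
  · next h =>
    subst h
    exact Finsupp.mapDomain_apply (fun _ _ h => (List.cons.injEq _ _ _ _ ▸ h).2) f l
  · next h =>
    apply Finsupp.mapDomain_notin_range
    rintro ⟨p, hp⟩
    simp at hp
    exact h hp.1.symm

lemma sumS_nil (F : (List B × List B) →₀ k) (e : List B × List B → k) (a : B) (x : List B) :
    (F.sum fun p c => (e p * c) • Finsupp.single (p.1, a :: p.2) (1 : k)) (x, []) = 0 := by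
  rw [Finsupp.sum_apply]
  apply Finset.sum_eq_zero
  intro p _
  simp [Finsupp.single_apply, Prod.ext_iff]

lemma sumS_cons (F : (List B × List B) →₀ k) (e : List B × List B → k) (a b : B)
    (x y : List B) :
    (F.sum fun p c => (e p * c) • Finsupp.single (p.1, a :: p.2) (1 : k)) (x, b :: y)
      = if a = b then e (x, y) * F (x, y) else 0 := by
  classical
  rw [Finsupp.sum_apply]
  simp only [Finsupp.smul_single, smul_eq_mul, mul_one, Finsupp.single_apply]
  split
  · next hab =>
    subst hab
    have : ∀ p : List B × List B, ((p.1, a :: p.2) = (x, a :: y)) = (p = (x, y)) := by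
      rintro ⟨p1, p2⟩
      simp [Prod.ext_iff, and_comm]
    simp only [this]
    rw [Finsupp.sum_ite_eq']
    split
    · rfl
    · next h =>
      rw [Finsupp.notMem_support_iff.mp h, mul_zero]
  · next hab =>
    apply Finset.sum_eq_zero
    intro p _
    dsimp only
    rw [if_neg]
    intro h
    simp [Prod.ext_iff] at h
    exact hab h.2.1

lemma primDiag_nil_left (y l : List B) :
    primDiag k deg l ([], y) = if y = l then 1 else 0 := by
  induction l generalizing y with
  | nil =>
    cases y <;> simp [primDiag, Finsupp.single_apply, Prod.ext_iff]
  | cons a l ih =>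
    rw [primDiag]
    rw [Finsupp.add_apply, mapP_nil]
    cases y with
    | nil => rw [sumS_nil]; simp
    | cons b y' =>
      rw [sumS_cons, zero_add]
      by_cases hab : a = b
      · subst hab
        rw [if_pos rfl, ih, degW_nil, mul_zero]
        simp [sgn]
      · rw [if_neg hab, if_neg]
        simp [eq_comm, hab]

lemma primDiag_nil_right (x l : List B) :
    primDiag k deg l (x, []) = if x = l then 1 else 0 := by
  induction l generalizing x with
  | nil =>
    cases x <;> simp [primDiag, Finsupp.single_apply, Prod.ext_iff]
  | cons a l ih =>
    rw [primDiag, Finsupp.add_apply, sumS_nil]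
    cases x with
    | nil => rw [mapP_nil]; simp
    | cons c x' =>
      rw [mapP_cons, add_zero]
      by_cases hca : c = a
      · subst hca
        rw [if_pos rfl, ih]
        simp
      · rw [if_neg hca, if_neg]
        simp [hca]

lemma shuffle_eq_primDiag (x y l : List B) :
    shuffle k deg x y l = primDiag k deg l (x, y) := by
  induction l generalizing x y with
  | nil =>
    match x, y with
    | [], y => simp [shuffle, primDiag, Finsupp.single_apply, Prod.ext_iff, eq_comm]
    | a :: x, [] => simp [shuffle, primDiag, Finsupp.single_apply, Prod.ext_iff]
    | a :: x, b :: y =>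
      rw [shuffle, primDiag]
      rw [Finsupp.add_apply, mapL_nil, Finsupp.smul_apply, mapL_nil]
      simp [Finsupp.single_apply, Prod.ext_iff]
  | cons c l ih =>
    match x, y with
    | [], y =>
      rw [shuffle, primDiag_nil_left]
      simp [Finsupp.single_apply, eq_comm]
    | a :: x, [] =>
      rw [shuffle, primDiag_nil_right]
      simp [Finsupp.single_apply, eq_comm]
    | a :: x, b :: y =>
      rw [shuffle, primDiag]
      rw [Finsupp.add_apply, Finsupp.add_apply, mapL_cons, Finsupp.smul_apply, mapL_cons,
        mapP_cons, sumS_cons]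
      congr 1
      · by_cases hca : c = a
        · rw [if_pos hca, if_pos hca.symm, ih]
        · rw [if_neg hca, if_neg (fun h => hca h.symm)]
      · by_cases hcb : c = b
        · subst hcb
          rw [if_pos rfl, if_pos rfl, ih, degW_cons, zsmul_eq_mul]
        · rw [if_neg hcb, if_neg hcb, smul_zero]

lemma deconcat_eq (l x y : List B) :
    (deconcat k l) (x, y) = if x ++ y = l then (1 : k) else 0 := by
  induction l generalizing x y with
  | nil =>
    cases x <;> simp [deconcat, Finsupp.single_apply, Prod.ext_iff, eq_comm]
  | cons a l ih =>
    rw [deconcat, Finsupp.add_apply]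
    cases x with
    | nil =>
      rw [mapP_nil, add_zero]
      simp [Finsupp.single_apply, Prod.ext_iff, eq_comm]
    | cons c x' =>
      rw [mapP_cons]
      by_cases hca : c = a
      · subst hca
        rw [if_pos rfl, ih]
        simp [Finsupp.single_apply, Prod.ext_iff]
      · rw [if_neg hca, add_zero]
        simp [Finsupp.single_apply, Prod.ext_iff, hca]

lemma degW_nonneg (hdeg : ∀ b, 1 ≤ deg b) (l : List B) : 0 ≤ degW deg l := by
  induction l with
  | nil => simp [degW]
  | cons a l ih => rw [degW_cons]; linarith [hdeg a]

lemma length_le_degW (hdeg : ∀ b, 1 ≤ deg b) (l : List B) :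
    (l.length : ℤ) ≤ degW deg l := by
  induction l with
  | nil => simp [degW]
  | cons a l ih =>
    rw [degW_cons, List.length_cons]
    push_cast
    linarith [hdeg a]

lemma deg_le_degW (hdeg : ∀ b, 1 ≤ deg b) {b : B} {l : List B} (h : b ∈ l) :
    deg b ≤ degW deg l := by
  induction l with
  | nil => simp at h
  | cons a l ih =>
    rw [degW_cons]
    rcases List.mem_cons.mp h with h | h
    · subst h; linarith [degW_nonneg deg hdeg l]
    · linarith [ih h, hdeg a]

lemma finite_words (hdeg : ∀ b, 1 ≤ deg b) (hft : ∀ d : ℤ, Finite {b : B // deg b = d})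
    (d : ℤ) : Finite {l : List B // degW deg l = d} := by
  classical
  have hS : ({b : B | deg b ≤ d}).Finite := by
    have hsub : {b : B | deg b ≤ d} ⊆ ⋃ e ∈ Finset.Icc (1 : ℤ) d, {b | deg b = e} := by
      intro b hb
      exact Set.mem_biUnion (Finset.mem_Icc.mpr ⟨hdeg b, hb⟩) rfl
    refine Set.Finite.subset ?_ hsub
    refine Set.Finite.biUnion (Finset.finite_toSet _) ?_
    intro e _
    haveI : Finite ↥{b : B | deg b = e} := hft e
    exact Set.toFinite _
  have : Finite ↥{b : B | deg b ≤ d} := hS.to_subtype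
  have hfin2 : ({l : List ↥{b : B | deg b ≤ d} | l.length ≤ d.toNat}).Finite :=
    List.finite_length_le _ _
  have hmain : ({l : List B | degW deg l = d}).Finite := by
    refine Set.Finite.subset (hfin2.image (List.map Subtype.val)) ?_
    intro l hl
    simp only [Set.mem_setOf_eq] at hl
    refine ⟨l.attach.map (fun b => ⟨b.1, ?_⟩), ?_, ?_⟩
    · exact hl ▸ deg_le_degW deg hdeg b.2
    · show (List.map _ l.attach).length ≤ d.toNat
      rw [List.length_map, List.length_attach,
        Int.le_toNat (hl ▸ degW_nonneg deg hdeg l)]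
      exact hl ▸ length_le_degW deg hdeg l
    · simp
  exact hmain.to_subtype

end Aux

theorem dual_of_tensor_algebra (k B : Type*) [CommRing k] [DecidableEq B] (deg : B → ℤ)
    (hdeg : ∀ b, 1 ≤ deg b) (hft : ∀ d : ℤ, Finite {b : B // deg b = d}) :
    -- (i) `Φ` is bijective in each total degree
    (∀ d : ℤ, Function.Bijective
      (fun f : {l : List B // degW deg l = d} →₀ k =>
        (f : {l : List B // degW deg l = d} → k))) ∧
    -- (ii) the shuffle product of `TC(V^∨)` is dual to the primitive diagonal
    --      of `TA V`: `⟨x·y, l⟩ = ⟨x ⊗ y, Δ l⟩`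
    (∀ x y l : List B, (shuffle k deg x y) l = (primDiag k deg l) (x, y)) ∧
    -- (iii) the deconcatenation coproduct of `TC(V^∨)` is dual to the
    --       concatenation product of `TA V`: `⟨Δx, s ⊗ t⟩ = ⟨x, st⟩`
    (∀ l x y : List B, (deconcat k l) (x, y) = if x ++ y = l then (1 : k) else 0) := by
  refine ⟨?_, fun x y l => shuffle_eq_primDiag deg x y l, fun l x y => deconcat_eq l x y⟩
  intro d
  have : Finite {l : List B // degW deg l = d} := finite_words deg hdeg hft d
  exact ⟨fun f g h => DFunLike.coe_injective h,
    fun g => ⟨Finsupp.equivFunOnFinite.symm g, Finsupp.equivFunOnFinite.apply_symm_apply g⟩⟩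
end

section
/- (Perturbation Lemma) Let (X,∂) ⇄ (Y,d) with inclusion ∇, projection f, and homotopy Φ be a strong deformation retract of chain complexes satisfying the annihilation conditions fΦ = 0, Φ∇ = 0, Φ² = 0, and suppose both complexes carry increasing filtrations bounded below preserved by ∂, d, f, ∇, Φ. Let t : Y → Y be a degree −1 map lowering filtration such that d + t is a differential. Then ∂_∞ = ∂ + Σ_{k>0} f(tΦ)^{k−1}t∇, ∇_∞ = ∇ + Σ_{k>0}(Φt)^k∇, f_∞ = f + Σ_{k>0} f(tΦ)^k, Φ_∞ = Φ + Σ_{k>0}(Φt)^kΦ are well-defined, and (X,∂_∞) ⇄ (Y,d+t) with ∇_∞, f_∞, Φ_∞ is a strong deformation retract. -/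
/-!
STATEMENT 6 (Perturbation Lemma).  We model chain complexes over a commutative
ring `k` as `k`-modules equipped with a square-zero endomorphism (the total
complex point of view); a strong deformation retract `(X,∂) ⇄ (Y,d)` consists
of chain maps `∇ : X → Y`, `f : Y → X` and a homotopy `Φ : Y → Y` with
`f∇ = id` and `∇f − id = dΦ + Φd`.

Given the annihilation conditions `fΦ = 0`, `Φ∇ = 0`, `Φ² = 0`, increasing,
bounded-below and exhaustive filtrations preserved by all the structure maps,
and a filtration-lowering perturbation `t` with `(d+t)² = 0`, the perturbed
data `∂_∞, ∇_∞, f_∞, Φ_∞` are well defined (their defining series are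
pointwise eventually constant, which is how we express them) and form a
strong deformation retract of `(Y, d+t)`.
-/


namespace PerturbAux

variable {k Y : Type*} [CommRing k] [AddCommGroup Y] [Module k Y]

def LocNil (B : Y →ₗ[k] Y) : Prop := ∀ y : Y, ∃ N : ℕ, ∀ j, N ≤ j → (B ^ j) y = 0

variable (B : Y →ₗ[k] Y) (hB : LocNil B)

noncomputable def bnd (y : Y) : ℕ := (hB y).choose

lemma bnd_spec (y : Y) : ∀ j, bnd B hB y ≤ j → (B ^ j) y = 0 := (hB y).choose_spec

lemma sum_eq (y : Y) {m : ℕ} (hm : bnd B hB y ≤ m) :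
    ∑ j ∈ Finset.range m, (B ^ j) y = ∑ j ∈ Finset.range (bnd B hB y), (B ^ j) y := by
  refine (Finset.sum_subset (Finset.range_subset_range.2 hm) ?_).symm
  intro j hj hj'
  exact bnd_spec B hB y j (le_of_not_gt (by simpa using hj'))

noncomputable def G : Y →ₗ[k] Y where
  toFun y := ∑ j ∈ Finset.range (bnd B hB y), (B ^ j) y
  map_add' y z := by
    show (∑ j ∈ Finset.range (bnd B hB (y+z)), (B ^ j) (y+z)) =
      (∑ j ∈ Finset.range (bnd B hB y), (B ^ j) y) + (∑ j ∈ Finset.range (bnd B hB z), (B ^ j) z)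
    have e1 := sum_eq B hB (y + z) (m := max (bnd B hB (y + z)) (max (bnd B hB y) (bnd B hB z)))
      (le_max_left _ _)
    have e2 := sum_eq B hB y (m := max (bnd B hB (y + z)) (max (bnd B hB y) (bnd B hB z)))
      (le_trans (le_max_left _ _) (le_max_right _ _))
    have e3 := sum_eq B hB z (m := max (bnd B hB (y + z)) (max (bnd B hB y) (bnd B hB z)))
      (le_trans (le_max_right _ _) (le_max_right _ _))
    rw [← e1, ← e2, ← e3]
    simp [map_add, Finset.sum_add_distrib]
  map_smul' c y := by
    show (∑ j ∈ Finset.range (bnd B hB (c • y)), (B ^ j) (c • y)) =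
      (RingHom.id k) c • ∑ j ∈ Finset.range (bnd B hB y), (B ^ j) y
    have e1 := sum_eq B hB (c • y) (m := max (bnd B hB (c • y)) (bnd B hB y)) (le_max_left _ _)
    have e2 := sum_eq B hB y (m := max (bnd B hB (c • y)) (bnd B hB y)) (le_max_right _ _)
    rw [← e1, ← e2]
    simp [map_smul, Finset.smul_sum]

lemma G_apply (y : Y) {m : ℕ} (hm : bnd B hB y ≤ m) :
    G B hB y = ∑ j ∈ Finset.range m, (B ^ j) y := (sum_eq B hB y hm).symm

lemma G_fix1 (y : Y) : G B hB y = y + B (G B hB y) := by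
  have h1 : G B hB y = ∑ j ∈ Finset.range (bnd B hB y + 1), (B ^ j) y :=
    G_apply B hB y (Nat.le_succ _)
  rw [Finset.sum_range_succ'] at h1
  have h2 : ∀ j : ℕ, (B ^ (j + 1)) y = B ((B ^ j) y) := by
    intro j; rw [pow_succ']; rfl
  simp only [h2, pow_zero, Module.End.one_apply] at h1
  conv_lhs => rw [h1]
  rw [← map_sum, ← G_apply B hB y le_rfl]
  abel

lemma G_fix2 (y : Y) : G B hB y = y + G B hB (B y) := by
  set M := max (bnd B hB y) (bnd B hB (B y)) with hM
  have h1 : G B hB y = ∑ j ∈ Finset.range (M + 1), (B ^ j) y :=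
    G_apply B hB y (le_trans (le_max_left _ _) (Nat.le_succ _))
  rw [Finset.sum_range_succ'] at h1
  have h2 : ∀ j : ℕ, (B ^ (j + 1)) y = (B ^ j) (B y) := by
    intro j; rw [pow_succ]; rfl
  simp only [h2, pow_zero, Module.End.one_apply] at h1
  conv_lhs => rw [h1]
  rw [← G_apply B hB (B y) (le_max_right _ _)]
  abel

lemma G_comm {B B' : Y →ₗ[k] Y} (hB : LocNil B) (hB' : LocNil B') (u : Y →ₗ[k] Y)
    (hc : ∀ z, u (B z) = B' (u z)) (y : Y) : u (G B hB y) = G B' hB' (u y) := by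
  have hpow : ∀ (j : ℕ) (z : Y), u ((B ^ j) z) = (B' ^ j) (u z) := by
    intro j
    induction j with
    | zero => intro z; simp
    | succ j ih =>
      intro z
      have e1 : (B ^ (j + 1)) z = (B ^ j) (B z) := by rw [pow_succ]; rfl
      have e2 : (B' ^ (j + 1)) (u z) = (B' ^ j) (B' (u z)) := by rw [pow_succ]; rfl
      rw [e1, e2, ih (B z), hc z]
  set M := max (bnd B hB y) (bnd B' hB' (u y)) with hM
  rw [G_apply B hB y (le_max_left _ _), G_apply B' hB' (u y) (le_max_right _ _), map_sum]
  exact Finset.sum_congr rfl fun j _ => hpow j y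

lemma G_absorb {B : Y →ₗ[k] Y} (hB : LocNil B) (z : Y) (hz : B z = 0) : G B hB z = z := by
  rw [G_apply B hB z (le_max_left _ 1)]
  rw [Finset.sum_eq_single_of_mem 0 (Finset.mem_range.2 (lt_of_lt_of_le Nat.one_pos (le_max_right _ 1)))]
  · simp
  · intro j _ hj
    obtain ⟨i, rfl⟩ := Nat.exists_eq_succ_of_ne_zero hj
    have : (B ^ (i + 1)) z = (B ^ i) (B z) := by rw [pow_succ]; rfl
    rw [this, hz, map_zero]

lemma locNil_of_filt (FY : ℤ → Submodule k Y) (hbd : ∃ N : ℤ, ∀ n ≤ N, FY n = ⊥)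
    (hexh : ∀ y : Y, ∃ n, y ∈ FY n) (B : Y →ₗ[k] Y)
    (hBF : ∀ n, (FY n).map B ≤ FY (n - 1)) : LocNil B := by
  intro y
  obtain ⟨n, hn⟩ := hexh y
  obtain ⟨N0, h0⟩ := hbd
  have key : ∀ j : ℕ, (B ^ j) y ∈ FY (n - j) := by
    intro j
    induction j with
    | zero => simpa using hn
    | succ j ih =>
      have h1 : B ((B ^ j) y) ∈ FY (n - j - 1) := hBF _ ⟨_, ih, rfl⟩
      have h2 : (B ^ (j + 1)) y = B ((B ^ j) y) := by rw [pow_succ']; rfl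
      rw [h2]
      convert h1 using 2
      push_cast; ring
  refine ⟨(n - N0).toNat, fun j hj => ?_⟩
  have hb : FY (n - j) = ⊥ := h0 _ (by omega)
  have := key j
  rw [hb] at this
  simpa using this

end PerturbAux


open PerturbAux in
theorem perturbation_lemma {k X Y : Type*} [CommRing k]
    [AddCommGroup X] [Module k X] [AddCommGroup Y] [Module k Y]
    (dX : X →ₗ[k] X) (dY : Y →ₗ[k] Y)
    (hdX : dX ∘ₗ dX = 0) (hdY : dY ∘ₗ dY = 0)
    (nab : X →ₗ[k] Y) (f : Y →ₗ[k] X) (Φ : Y →ₗ[k] Y)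
    -- chain maps and SDR conditions
    (hnab : dY ∘ₗ nab = nab ∘ₗ dX) (hf : dX ∘ₗ f = f ∘ₗ dY)
    (hfnab : f ∘ₗ nab = LinearMap.id)
    (hhtpy : nab ∘ₗ f - LinearMap.id = dY ∘ₗ Φ + Φ ∘ₗ dY)
    -- annihilation conditions
    (hfΦ : f ∘ₗ Φ = 0) (hΦnab : Φ ∘ₗ nab = 0) (hΦΦ : Φ ∘ₗ Φ = 0)
    -- increasing filtrations, bounded below and exhaustive
    (FX : ℤ → Submodule k X) (FY : ℤ → Submodule k Y)
    (hFXmono : Monotone FX) (hFYmono : Monotone FY)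
    (hFXbd : ∃ N : ℤ, ∀ n ≤ N, FX n = ⊥) (hFYbd : ∃ N : ℤ, ∀ n ≤ N, FY n = ⊥)
    (hFXexh : ∀ x : X, ∃ n, x ∈ FX n) (hFYexh : ∀ y : Y, ∃ n, y ∈ FY n)
    -- the filtrations are preserved by all structure maps
    (hdXF : ∀ n, (FX n).map dX ≤ FX n) (hdYF : ∀ n, (FY n).map dY ≤ FY n)
    (hnabF : ∀ n, (FX n).map nab ≤ FY n) (hfF : ∀ n, (FY n).map f ≤ FX n)
    (hΦF : ∀ n, (FY n).map Φ ≤ FY n)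
    -- the perturbation: lowers filtration, and `d + t` is a differential
    (t : Y →ₗ[k] Y) (htF : ∀ n, (FY n).map t ≤ FY (n - 1))
    (ht : (dY + t) ∘ₗ (dY + t) = 0) :
    ∃ (dX' : X →ₗ[k] X) (nab' : X →ₗ[k] Y) (f' : Y →ₗ[k] X) (Φ' : Y →ₗ[k] Y),
      -- the four maps are given by the pointwise eventually constant series
      (∀ x : X, ∃ N : ℕ, ∀ m ≥ N,
        dX' x = dX x + ∑ j ∈ Finset.range m, (f ∘ₗ (((t ∘ₗ Φ)^j) ∘ₗ (t ∘ₗ nab))) x) ∧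
      (∀ x : X, ∃ N : ℕ, ∀ m ≥ N,
        nab' x = nab x + ∑ j ∈ Finset.range m, (((Φ ∘ₗ t)^(j+1)) ∘ₗ nab) x) ∧
      (∀ y : Y, ∃ N : ℕ, ∀ m ≥ N,
        f' y = f y + ∑ j ∈ Finset.range m, (f ∘ₗ ((t ∘ₗ Φ)^(j+1))) y) ∧
      (∀ y : Y, ∃ N : ℕ, ∀ m ≥ N,
        Φ' y = Φ y + ∑ j ∈ Finset.range m, (((Φ ∘ₗ t)^(j+1)) ∘ₗ Φ) y) ∧
      -- `(X, dX')` is a chain complex and the perturbed data is an SDR of `(Y, d+t)`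
      dX' ∘ₗ dX' = 0 ∧
      (dY + t) ∘ₗ nab' = nab' ∘ₗ dX' ∧
      dX' ∘ₗ f' = f' ∘ₗ (dY + t) ∧
      f' ∘ₗ nab' = LinearMap.id ∧
      nab' ∘ₗ f' - LinearMap.id = (dY + t) ∘ₗ Φ' + Φ' ∘ₗ (dY + t) := by
  classical
  -- local nilpotence of Φ∘t and t∘Φ
  have hAF : ∀ n, (FY n).map (Φ ∘ₗ t) ≤ FY (n - 1) := by
    intro n y hy
    obtain ⟨z, hz, rfl⟩ := hy
    exact hΦF (n - 1) ⟨t z, htF n ⟨z, hz, rfl⟩, rfl⟩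
  have hA'F : ∀ n, (FY n).map (t ∘ₗ Φ) ≤ FY (n - 1) := by
    intro n y hy
    obtain ⟨z, hz, rfl⟩ := hy
    exact htF n ⟨Φ z, hΦF n ⟨z, hz, rfl⟩, rfl⟩
  have hA : LocNil (Φ ∘ₗ t) := locNil_of_filt FY hFYbd hFYexh _ hAF
  have hA' : LocNil (t ∘ₗ Φ) := locNil_of_filt FY hFYbd hFYexh _ hA'F
  set S : Y →ₗ[k] Y := G (Φ ∘ₗ t) hA with hSdef
  set S' : Y →ₗ[k] Y := G (t ∘ₗ Φ) hA' with hS'def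
  -- pointwise annihilation facts
  have pfΦ : ∀ z : Y, f (Φ z) = 0 := fun z => DFunLike.congr_fun hfΦ z
  have pΦnab : ∀ x : X, Φ (nab x) = 0 := fun x => DFunLike.congr_fun hΦnab x
  have pΦΦ : ∀ z : Y, Φ (Φ z) = 0 := fun z => DFunLike.congr_fun hΦΦ z
  -- End-level identities for S and S'
  have h1 : S = 1 + Φ * (t * S) := by
    ext y
    simpa [Module.End.mul_apply, LinearMap.add_apply, LinearMap.comp_apply] using
      G_fix1 (Φ ∘ₗ t) hA y
  have h2 : S = 1 + S * (Φ * t) := by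
    ext y
    simpa [Module.End.mul_apply, LinearMap.add_apply, LinearMap.comp_apply] using
      G_fix2 (Φ ∘ₗ t) hA y
  have h3 : S' = 1 + t * (Φ * S') := by
    ext y
    simpa [Module.End.mul_apply, LinearMap.add_apply, LinearMap.comp_apply] using
      G_fix1 (t ∘ₗ Φ) hA' y
  have h4 : S' = 1 + S' * (t * Φ) := by
    ext y
    simpa [Module.End.mul_apply, LinearMap.add_apply, LinearMap.comp_apply] using
      G_fix2 (t ∘ₗ Φ) hA' y
  have h5 : t * S = S' * t := by
    ext y
    simpa [Module.End.mul_apply] using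
      G_comm hA hA' t (fun z => by simp [LinearMap.comp_apply]) y
  have h6 : Φ * S' = S * Φ := by
    ext y
    simpa [Module.End.mul_apply] using
      G_comm hA' hA Φ (fun z => by simp [LinearMap.comp_apply]) y
  have h7 : ∀ z : Y, S' (Φ z) = Φ z := by
    intro z
    exact G_absorb hA' (Φ z) (by simp [LinearMap.comp_apply, pΦΦ z])
  have h8 : ∀ x : X, S' (nab x) = nab x := by
    intro x
    exact G_absorb hA' (nab x) (by simp [LinearMap.comp_apply, pΦnab x])
  -- ring-form hypotheses in End k Y
  have hP : nab ∘ₗ f = 1 + dY * Φ + Φ * dY := by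
    ext y
    have h := DFunLike.congr_fun hhtpy y
    simp only [LinearMap.sub_apply, LinearMap.add_apply, LinearMap.comp_apply,
      LinearMap.id_apply, Module.End.mul_apply, Module.End.one_apply] at h ⊢
    rw [sub_eq_iff_eq_add] at h
    rw [h]; abel
  have hq : dY * t + t * dY + t * t = 0 := by
    ext y
    have h2' := DFunLike.congr_fun ht y
    have h1' := DFunLike.congr_fun hdY y
    simp only [LinearMap.comp_apply, LinearMap.add_apply, LinearMap.zero_apply,
      map_add] at h1' h2'
    simp only [LinearMap.add_apply, Module.End.mul_apply, LinearMap.zero_apply]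
    rw [h1'] at h2'
    rw [← h2']; abel
  set P : Y →ₗ[k] Y := nab ∘ₗ f with hPdef
  -- main algebraic lemmas
  have goal1 : (dY + t) * S = dY + P * (t * S) + Φ * (t * ((dY + t) * S)) := by
    linear_combination (norm := noncomm_ring) dY * h1 - hP * (t * S) - Φ * hq * S
  have L1 : (dY + t) * S = S * dY + S * (P * (t * S)) := by
    linear_combination (norm := noncomm_ring) S * goal1 - h2 * ((dY + t) * S)
  have goal2 : S' * (dY + t) = dY + S' * (t * P) + S' * ((dY + t) * (t * Φ)) := by
    linear_combination (norm := noncomm_ring) h4 * dY - (S' * t) * hP - S' * hq * Φ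
  have L2 : S' * (dY + t) = dY * S' + S' * (t * (P * S')) := by
    linear_combination (norm := noncomm_ring) goal2 * S' - (S' * (dY + t)) * h3
  have M3 : S * (P * S') = S + S' - 1 + S * (Φ * dY) + dY * (Φ * S') := by
    linear_combination (norm := noncomm_ring) S * hP * S' + h2 * (dY * Φ * S') +
      (S * Φ * dY) * h3 + (S * Φ) * hq * (Φ * S') + h2 * (S' - 1) + (S * Φ * t) * h3
  have K1 : (dY + t) * (S * Φ) = S * (dY * Φ) + S * (P * (t * (Φ * S'))) := by
    linear_combination (norm := noncomm_ring) L1 * Φ - (S * (P * t)) * h6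
  have K2 : (S * Φ) * (dY + t) = Φ * (dY * S') + Φ * (t * (S * (P * S'))) := by
    linear_combination (norm := noncomm_ring) Φ * L2 - h6 * (dY + t) - Φ * h5 * (P * S')
  have I5core : S * (P * S') - 1 = (dY + t) * (S * Φ) + (S * Φ) * (dY + t) := by
    linear_combination (norm := noncomm_ring) - K1 - K2 - M3 + S * hP + (S * P) * h3 +
      h1 * (P * S') + hP * S'
  -- pointwise versions of structural chain-map facts
  have pnab : ∀ x : X, dY (nab x) = nab (dX x) := by
    intro x; simpa using DFunLike.congr_fun hnab x
  have pf : ∀ z : Y, dX (f z) = f (dY z) := by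
    intro z; simpa using DFunLike.congr_fun hf z
  have pfnab : ∀ x : X, f (nab x) = x := by
    intro x; simpa using DFunLike.congr_fun hfnab x
  have pht : ∀ z : Y, dY (dY z + t z) + t (dY z + t z) = 0 := by
    intro z; simpa using DFunLike.congr_fun ht z
  have ph5 : ∀ z : Y, t (S z) = S' (t z) := by
    intro z; simpa [Module.End.mul_apply] using DFunLike.congr_fun h5 z
  -- fixed point identities, pointwise
  have pfix1 : ∀ z : Y, S z = z + Φ (t (S z)) := by
    intro z; simpa [LinearMap.comp_apply] using G_fix1 (Φ ∘ₗ t) hA z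
  -- the perturbed maps
  set nab' : X →ₗ[k] Y := S ∘ₗ nab with hnab'def
  set f' : Y →ₗ[k] X := f ∘ₗ S' with hf'def
  set Φ' : Y →ₗ[k] Y := S ∘ₗ Φ with hΦ'def
  set dX' : X →ₗ[k] X := dX + f ∘ₗ (t ∘ₗ nab') with hdX'def
  -- SDR identities
  have I2 : (dY + t) ∘ₗ nab' = nab' ∘ₗ dX' := by
    ext x
    have l1 := DFunLike.congr_fun L1 (nab x)
    simp only [Module.End.mul_apply, LinearMap.add_apply, hPdef, LinearMap.comp_apply] at l1
    simp only [hnab'def, hdX'def, LinearMap.comp_apply, LinearMap.add_apply, map_add]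
    rw [l1, pnab x]
  have I3 : dX' ∘ₗ f' = f' ∘ₗ (dY + t) := by
    ext y
    have l2 := DFunLike.congr_fun L2 y
    simp only [Module.End.mul_apply, LinearMap.add_apply, hPdef, LinearMap.comp_apply,
      map_add] at l2
    simp only [hf'def, hdX'def, hnab'def, LinearMap.comp_apply, LinearMap.add_apply, map_add]
    have l2' : f (S' (dY y)) + f (S' (t y)) = f (dY (S' y)) + f (S' (t (nab (f (S' y))))) := by
      have h := congrArg f l2
      simpa [map_add] using h
    rw [pf (S' y), ph5 (nab (f (S' y))), ← l2']
  have I4 : f' ∘ₗ nab' = LinearMap.id := by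
    ext x
    simp only [hf'def, hnab'def, LinearMap.comp_apply, LinearMap.id_apply]
    rw [pfix1 (nab x), map_add, h8 x, h7 (t (S (nab x))), map_add, pfnab x,
      pfΦ (t (S (nab x))), add_zero]
  have I5 : nab' ∘ₗ f' - LinearMap.id = (dY + t) ∘ₗ Φ' + Φ' ∘ₗ (dY + t) := by
    ext y
    have core := DFunLike.congr_fun I5core y
    simp only [Module.End.mul_apply, LinearMap.sub_apply, Module.End.one_apply,
      LinearMap.add_apply, hPdef, LinearMap.comp_apply, map_add] at core
    simp only [hnab'def, hf'def, hΦ'def, LinearMap.sub_apply, LinearMap.add_apply,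
      LinearMap.comp_apply, LinearMap.id_apply, map_add]
    rw [core]
  have I1 : dX' ∘ₗ dX' = 0 := by
    have pid : ∀ z : X, f' (nab' z) = z := by
      intro z; simpa using DFunLike.congr_fun I4 z
    have pI2 : ∀ x : X, (dY + t) (nab' x) = nab' (dX' x) := by
      intro x; simpa using DFunLike.congr_fun I2 x
    have pI3 : ∀ z : Y, dX' (f' z) = f' ((dY + t) z) := by
      intro z; simpa using DFunLike.congr_fun I3 z
    have pc2 : ∀ z : Y, (dY + t) ((dY + t) z) = 0 := by
      intro z; simpa using DFunLike.congr_fun ht z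
    ext x
    simp only [LinearMap.comp_apply, LinearMap.zero_apply]
    calc dX' (dX' x) = dX' (f' (nab' (dX' x))) := by rw [pid]
      _ = dX' (f' ((dY + t) (nab' x))) := by rw [pI2]
      _ = f' ((dY + t) ((dY + t) (nab' x))) := pI3 _
      _ = 0 := by rw [pc2, map_zero]
  refine ⟨dX', nab', f', Φ', ?_, ?_, ?_, ?_, I1, I2, I3, I4, I5⟩
  · -- series for dX'
    intro x
    refine ⟨bnd (t ∘ₗ Φ) hA' (t (nab x)), fun m hm => ?_⟩
    have e0 : dX' x = dX x + f (t (S (nab x))) := by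
      simp [hdX'def, hnab'def, LinearMap.add_apply, LinearMap.comp_apply]
    rw [e0, ph5 (nab x), G_apply (t ∘ₗ Φ) hA' (t (nab x)) hm, map_sum]
    simp [LinearMap.comp_apply]
  · -- series for nab'
    intro x
    refine ⟨bnd (Φ ∘ₗ t) hA (nab x), fun m hm => ?_⟩
    have e0 : nab' x = ∑ j ∈ Finset.range (m + 1), ((Φ ∘ₗ t) ^ j) (nab x) :=
      G_apply (Φ ∘ₗ t) hA (nab x) (le_trans hm (Nat.le_succ m))
    rw [e0, Finset.sum_range_succ']
    simp [LinearMap.comp_apply]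
    abel
  · -- series for f'
    intro y
    refine ⟨bnd (t ∘ₗ Φ) hA' y, fun m hm => ?_⟩
    have e0 : f' y = f (∑ j ∈ Finset.range (m + 1), ((t ∘ₗ Φ) ^ j) y) := by
      simp only [hf'def, LinearMap.comp_apply]
      rw [G_apply (t ∘ₗ Φ) hA' y (le_trans hm (Nat.le_succ m))]
    rw [e0, map_sum, Finset.sum_range_succ']
    simp [LinearMap.comp_apply]
    abel
  · -- series for Φ'
    intro y
    refine ⟨bnd (Φ ∘ₗ t) hA (Φ y), fun m hm => ?_⟩
    have e0 : Φ' y = ∑ j ∈ Finset.range (m + 1), ((Φ ∘ₗ t) ^ j) (Φ y) :=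
      G_apply (Φ ∘ₗ t) hA (Φ y) (le_trans hm (Nat.le_succ m))
    rw [e0, Finset.sum_range_succ']
    simp [LinearMap.comp_apply]
    abel
end

section
/- Let d ≥ 1 be an odd integer and k a commutative ring. The cohomology algebra of the free loop space on S^{d+1}, computed as the homology of the complex (E(s^{-1}v) ⊗ Ev ⊗ Γ(v²), d_2) with d_2(γ_k(v²)) = 2(s^{-1}v)v·γ_{k−1}(v²) for |v| = d, is isomorphic as a graded k-module to k ⊕ (_2k)·Γ^+(v²) ⊕ k·v·Γ(v²) ⊕ k·(s^{-1}v)·Γ(v²) ⊕ (k/2k)·v·(s^{-1}v)·Γ(v²), where _2k and k/2k denote the kernel and cokernel of multiplication by 2 on k. In particular, if 1/2 ∈ k then all products of elements of positive degree in this homology algebra vanish. -/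
/-!
STATEMENT 15.  For `d` odd, the free loop space cohomology of `S^{d+1}` is
computed by the complex `(E(s⁻¹v) ⊗ Ev ⊗ Γ(v²), d₂)` with `|v| = d`,
`d₂(γ_k(v²)) = 2(s⁻¹v)·v·γ_{k-1}(v²)`.  We model the complex by its monomial
basis `(s⁻¹v)^a v^b γ^i(v²)` (`a, b ∈ {0,1}`, `i ∈ ℕ`); since `d` is odd,
`s⁻¹v` has even degree and `v` odd degree with `v² = 0`, so all Koszul signs
are `+1`.  Statement: the homology is, as a `k`-module,
`k ⊕ (₂k)·Γ⁺(v²) ⊕ k·v·Γ(v²) ⊕ k·(s⁻¹v)·Γ(v²) ⊕ (k/2k)·v(s⁻¹v)·Γ(v²)`;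
and if `1/2 ∈ k` then all products of positive-degree homology classes
vanish.
-/

/-- Monomial basis `(s⁻¹v)^a v^b γ^i(v²)`. -/
abbrev SphBasis := Bool × Bool × ℕ

/-- The differential `d₂` on monomials: `γ^i(v²) ↦ 2·(s⁻¹v)v·γ^{i-1}(v²)`
(`i ≥ 1`); monomials already containing `s⁻¹v` or `v` are killed since
`(s⁻¹v)² = 0 = v²`. -/
noncomputable def sphD {k : Type*} [CommRing k] (g : SphBasis) : SphBasis →₀ k :=
  match g with
  | (false, false, i + 1) => (2 : k) • Finsupp.single (true, true, i) 1
  | _ => 0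

/-- The differential, extended `k`-linearly. -/
noncomputable def sphDiff (k : Type*) [CommRing k] : (SphBasis →₀ k) →ₗ[k] (SphBasis →₀ k) :=
  Finsupp.lift _ k _ sphD

/-- The (sign-free) product of basis monomials. -/
noncomputable def sphMulB {k : Type*} [CommRing k] (g g' : SphBasis) : SphBasis →₀ k :=
  if (g.1 ∧ g'.1) ∨ (g.2.1 ∧ g'.2.1) then 0
  else (Nat.choose (g.2.2 + g'.2.2) g.2.2 : k) •
    Finsupp.single (g.1 || g'.1, g.2.1 || g'.2.1, g.2.2 + g'.2.2) 1

/-- The product, extended bilinearly. -/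
noncomputable def sphMul {k : Type*} [CommRing k] (x y : SphBasis →₀ k) : SphBasis →₀ k :=
  x.sum fun g c => y.sum fun g' c' => (c * c') • sphMulB g g'

section Aux
variable {k : Type*} [CommRing k]

lemma sphD_eval_ne (g h : SphBasis) (hh : h.1 = false ∨ h.2.1 = false) :
    (sphD g : SphBasis →₀ k) h = 0 := by
  obtain ⟨a, b, j⟩ := g
  cases a <;> cases b <;> (try rfl) <;> cases j <;> (try rfl)
  simp only [sphD, Finsupp.smul_apply, Finsupp.single_apply]
  obtain ⟨c, d, i⟩ := h
  rcases hh with hh | hh <;> simp_all [Prod.ext_iff]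

lemma sphD_eval (g : SphBasis) (i : ℕ) :
    (sphD g : SphBasis →₀ k) (true, true, i) = if g = (false, false, i + 1) then 2 else 0 := by
  obtain ⟨a, b, j⟩ := g
  cases a <;> cases b <;> (try (cases j)) <;>
    simp_all [sphD, Finsupp.single_apply, Prod.ext_iff]

lemma sphDiff_tt (x : SphBasis →₀ k) (i : ℕ) :
    sphDiff k x (true, true, i) = 2 * x (false, false, i + 1) := by
  classical
  rw [sphDiff, Finsupp.lift_apply, Finsupp.sum_apply, Finsupp.sum]
  simp only [Finsupp.smul_apply, sphD_eval, smul_eq_mul, mul_ite, mul_zero]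
  rw [Finset.sum_ite_eq' x.support ((false, false, i+1) : SphBasis) (fun g => x g * 2)]
  by_cases h : ((false, false, i+1) : SphBasis) ∈ x.support
  · rw [if_pos h, mul_comm]
  · rw [if_neg h, Finsupp.notMem_support_iff.mp h, mul_zero]

lemma sphDiff_ne (x : SphBasis →₀ k) (h : SphBasis) (hh : h.1 = false ∨ h.2.1 = false) :
    sphDiff k x h = 0 := by
  rw [sphDiff, Finsupp.lift_apply, Finsupp.sum_apply, Finsupp.sum]
  exact Finset.sum_eq_zero fun g _ => by
    rw [Finsupp.smul_apply, sphD_eval_ne g h hh, smul_zero]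

lemma sphDiff_single_succ (i : ℕ) (c : k) :
    sphDiff k (Finsupp.single (false, false, i + 1) c) =
      Finsupp.single (true, true, i) (2 * c) := by
  rw [sphDiff, Finsupp.lift_apply, Finsupp.sum_single_index (by simp)]
  show c • sphD (false, false, i+1) = _
  simp only [sphD, smul_smul, Finsupp.smul_single, smul_eq_mul]
  ring_nf

lemma mem_ker_iff (x : SphBasis →₀ k) :
    sphDiff k x = 0 ↔ ∀ i, (2 : k) * x (false, false, i + 1) = 0 := by
  constructor
  · intro h i
    rw [← sphDiff_tt, h, Finsupp.coe_zero, Pi.zero_apply]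
  · intro h
    ext g
    obtain ⟨a, b, i⟩ := g
    rw [Finsupp.coe_zero, Pi.zero_apply]
    cases a
    · exact sphDiff_ne x _ (Or.inl rfl)
    cases b
    · exact sphDiff_ne x _ (Or.inr rfl)
    · rw [sphDiff_tt, h]

lemma mem_range_sphDiff (x : SphBasis →₀ k)
    (h0 : ∀ g : SphBasis, g.1 = false ∨ g.2.1 = false → x g = 0)
    (h2 : ∀ i : ℕ, x (true, true, i) ∈ Ideal.span {(2 : k)}) :
    x ∈ LinearMap.range (sphDiff k) := by
  rw [← Finsupp.sum_single x]
  apply Submodule.finsuppSum_mem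
  intro g hg
  obtain ⟨a, b, i⟩ := g
  cases a
  · rw [h0 _ (Or.inl rfl), Finsupp.single_zero]; exact zero_mem _
  cases b
  · rw [h0 _ (Or.inr rfl), Finsupp.single_zero]; exact zero_mem _
  obtain ⟨c, hc⟩ := Ideal.mem_span_singleton'.mp (h2 i)
  exact ⟨Finsupp.single (false, false, i + 1) c, by
    rw [sphDiff_single_succ, mul_comm, hc]⟩

end Aux

section Phi
variable {k : Type*} [CommRing k]

lemma emb_inj (a b : Bool) : Function.Injective (fun i : ℕ => ((a, b, i) : SphBasis)) :=
  fun i j h => by simpa using congrArg (fun g : SphBasis => g.2.2) h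

/-- Projection onto the `(a, b, ·)` coordinates. -/
noncomputable def projAB (k : Type*) [CommRing k] (a b : Bool) :
    (SphBasis →₀ k) →ₗ[k] (ℕ →₀ k) :=
  Finsupp.lcomapDomain (fun i : ℕ => ((a, b, i) : SphBasis)) (emb_inj a b)

@[simp] lemma projAB_apply (a b : Bool) (x : SphBasis →₀ k) (i : ℕ) :
    projAB k a b x i = x (a, b, i) := rfl

lemma shift_inj : Function.Injective (fun i : ℕ => ((false, false, i + 1) : SphBasis)) :=
  fun i j h => by simpa using congrArg (fun g : SphBasis => g.2.2) h

noncomputable def shiftProj (k : Type*) [CommRing k] :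
    (SphBasis →₀ k) →ₗ[k] (ℕ →₀ k) :=
  Finsupp.lcomapDomain (fun i : ℕ => ((false, false, i + 1) : SphBasis)) shift_inj

@[simp] lemma shiftProj_apply (x : SphBasis →₀ k) (i : ℕ) :
    shiftProj k x i = x (false, false, i + 1) := rfl

/-- The `₂k`-valued part of the homology map, on cycles. -/
noncomputable def kerPart (k : Type*) [CommRing k] :
    LinearMap.ker (sphDiff k) →ₗ[k]
      (ℕ →₀ LinearMap.ker (LinearMap.lsmul k k (2 : k))) where
  toFun x :=
    ⟨(shiftProj k (x : SphBasis →₀ k)).support,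
     fun j => ⟨shiftProj k (x : SphBasis →₀ k) j, by
        rw [LinearMap.mem_ker, LinearMap.lsmul_apply, smul_eq_mul, shiftProj_apply]
        exact (mem_ker_iff _).mp (LinearMap.mem_ker.mp x.2) j⟩,
     fun j => by simp [Finsupp.mem_support_iff, Submodule.mk_eq_zero]⟩
  map_add' x y := Finsupp.ext fun j => Subtype.ext <| by
    simp [Finsupp.coe_mk]
  map_smul' c x := Finsupp.ext fun j => Subtype.ext <| by
    simp [Finsupp.coe_mk]

@[simp] lemma kerPart_apply (x : LinearMap.ker (sphDiff k)) (j : ℕ) :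
    (kerPart k x j : k) = (x : SphBasis →₀ k) (false, false, j + 1) := rfl

/-- `ℕ ≃ {i // 1 ≤ i}`. -/
def eShift : ℕ ≃ {i : ℕ // 1 ≤ i} where
  toFun j := ⟨j + 1, Nat.le_add_left 1 j⟩
  invFun i := i.1 - 1
  left_inv j := by simp
  right_inv i := Subtype.ext (Nat.succ_pred_eq_of_pos i.2)

lemma mapDomain_emb_apply (a b : Bool) (f : ℕ →₀ k) (g : SphBasis) :
    Finsupp.mapDomain (fun i : ℕ => ((a, b, i) : SphBasis)) f g =
      if g.1 = a ∧ g.2.1 = b then f g.2.2 else 0 := by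
  obtain ⟨a', b', i⟩ := g
  by_cases h : a' = a ∧ b' = b
  · obtain ⟨rfl, rfl⟩ := h
    simpa using Finsupp.mapDomain_apply (emb_inj _ _) f i
  · rw [if_neg h, Finsupp.mapDomain_notin_range]
    rintro ⟨j, hj⟩
    exact h ⟨(congrArg (fun g : SphBasis => g.1) hj).symm,
      (congrArg (fun g : SphBasis => g.2.1) hj).symm⟩

lemma sub1_inj : Function.Injective
    (fun i : {i : ℕ // 1 ≤ i} => ((false, false, i.1) : SphBasis)) :=
  fun i j h => Subtype.ext (by simpa using congrArg (fun g : SphBasis => g.2.2) h)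

lemma mapDomain_sub1_apply (f : {i : ℕ // 1 ≤ i} →₀ k) (g : SphBasis) :
    Finsupp.mapDomain (fun i : {i : ℕ // 1 ≤ i} => ((false, false, i.1) : SphBasis)) f g =
      if h : g.1 = false ∧ g.2.1 = false ∧ 1 ≤ g.2.2 then f ⟨g.2.2, h.2.2⟩ else 0 := by
  obtain ⟨a', b', i⟩ := g
  by_cases h : a' = false ∧ b' = false ∧ 1 ≤ i
  · obtain ⟨rfl, rfl, hi⟩ := h
    rw [dif_pos ⟨rfl, rfl, hi⟩]
    exact Finsupp.mapDomain_apply sub1_inj f ⟨i, hi⟩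
  · rw [dif_neg h, Finsupp.mapDomain_notin_range]
    rintro ⟨⟨j, hj⟩, hje⟩
    apply h
    refine ⟨(congrArg (fun g : SphBasis => g.1) hje).symm,
      (congrArg (fun g : SphBasis => g.2.1) hje).symm, ?_⟩
    have := congrArg (fun g : SphBasis => g.2.2) hje
    simp only at this
    omega

end Phi

lemma domLCongr_kerPart_coe {k : Type*} [CommRing k] (x : LinearMap.ker (sphDiff k))
    (i : {i : ℕ // 1 ≤ i}) :
    (((Finsupp.domLCongr (R := k) (M := LinearMap.ker (LinearMap.lsmul k k (2 : k))) eShift)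
        ((kerPart k) x) : {i : ℕ // 1 ≤ i} →₀ _) i : k)
      = (x : SphBasis →₀ k) (false, false, i.1) := by
  show ((kerPart k x) (eShift.symm i) : k) = _
  rw [kerPart_apply]
  show (x : SphBasis →₀ k) (false, false, i.1 - 1 + 1) = _
  rw [Nat.sub_add_cancel i.2]


theorem free_loop_cohomology_of_sphere (k : Type*) [CommRing k]
    (d : ℕ) (hd : Odd d) (hd1 : 1 ≤ d) :
    -- it is a complex
    sphDiff k ∘ₗ sphDiff k = 0 ∧
    -- homology as a `k`-module (a surjection from cycles with kernel the
    -- boundaries, i.e. an isomorphism `ker/im ≃ T`)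
    (∃ φ : LinearMap.ker (sphDiff k) →ₗ[k]
        (k ×                                                  -- `k·1`
         ({i : ℕ // 1 ≤ i} →₀ LinearMap.ker (LinearMap.lsmul k k (2 : k))) × -- `(₂k)Γ⁺(v²)`
         (ℕ →₀ k) ×                                           -- `k·v·γ^i(v²)`
         (ℕ →₀ k) ×                                           -- `k·(s⁻¹v)·γ^i(v²)`
         (ℕ →₀ (k ⧸ Ideal.span {(2 : k)}))),                  -- `(k/2k)·v(s⁻¹v)γ^i(v²)`
      Function.Surjective φ ∧
      LinearMap.ker φ
        = (LinearMap.range (sphDiff k)).comap (LinearMap.ker (sphDiff k)).subtype) ∧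
    -- if `1/2 ∈ k`, all products of positive-degree classes vanish in homology
    (Invertible (2 : k) →
      ∀ x y : SphBasis →₀ k,
        sphDiff k x = 0 → sphDiff k y = 0 →
        x (false, false, 0) = 0 → y (false, false, 0) = 0 →
        sphMul x y ∈ LinearMap.range (sphDiff k)) := by

  classical
  refine ⟨?_, ?_, ?_⟩
  · -- it is a complex
    apply LinearMap.ext; intro x
    ext g
    obtain ⟨a, b, i⟩ := g
    rw [LinearMap.comp_apply, LinearMap.zero_apply, Finsupp.coe_zero, Pi.zero_apply]
    cases a
    · exact sphDiff_ne _ _ (Or.inl rfl)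
    cases b
    · exact sphDiff_ne _ _ (Or.inr rfl)
    · rw [sphDiff_tt, sphDiff_ne _ _ (Or.inl rfl), mul_zero]
  · -- homology computation
    refine ⟨LinearMap.prod
        (Finsupp.lapply ((false, false, 0) : SphBasis) ∘ₗ (LinearMap.ker (sphDiff k)).subtype)
        (LinearMap.prod ((Finsupp.domLCongr eShift).toLinearMap ∘ₗ kerPart k)
        (LinearMap.prod (projAB k false true ∘ₗ (LinearMap.ker (sphDiff k)).subtype)
        (LinearMap.prod (projAB k true false ∘ₗ (LinearMap.ker (sphDiff k)).subtype)
        (Finsupp.mapRange.linearMap (Ideal.span {(2 : k)}).mkQ ∘ₗ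
          projAB k true true ∘ₗ (LinearMap.ker (sphDiff k)).subtype)))), ?_, ?_⟩
    · -- surjectivity
      rintro ⟨c0, f1, f2, f3, q4⟩
      obtain ⟨l4, hl4⟩ := Finsupp.mapRange_surjective (Ideal.span {(2 : k)}).mkQ (map_zero _)
        (Submodule.mkQ_surjective _) q4
      set x0 : SphBasis →₀ k :=
        Finsupp.single ((false, false, 0) : SphBasis) c0
        + Finsupp.mapDomain (fun i : {i : ℕ // 1 ≤ i} => ((false, false, i.1) : SphBasis))
            (f1.mapRange Subtype.val rfl)
        + Finsupp.mapDomain (fun i : ℕ => ((false, true, i) : SphBasis)) f2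
        + Finsupp.mapDomain (fun i : ℕ => ((true, false, i) : SphBasis)) f3
        + Finsupp.mapDomain (fun i : ℕ => ((true, true, i) : SphBasis)) l4 with hx0def
      have h00 : x0 (false, false, 0) = c0 := by
        simp [hx0def, Finsupp.single_apply, mapDomain_emb_apply, mapDomain_sub1_apply]
      have h0s : ∀ (i : ℕ) (hi : 1 ≤ i), x0 (false, false, i) = (f1 ⟨i, hi⟩ : k) := by
        intro i hi
        have : ¬ ((false, false, 0) : SphBasis) = (false, false, i) := by
          simp [Prod.ext_iff]; omega
        simp [hx0def, Finsupp.single_apply, mapDomain_emb_apply, mapDomain_sub1_apply, hi,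
          this, Finsupp.mapRange_apply]
      have hft : ∀ i : ℕ, x0 (false, true, i) = f2 i := by
        intro i
        simp [hx0def, Finsupp.single_apply, mapDomain_emb_apply, mapDomain_sub1_apply,
          Prod.ext_iff]
      have htf : ∀ i : ℕ, x0 (true, false, i) = f3 i := by
        intro i
        simp [hx0def, Finsupp.single_apply, mapDomain_emb_apply, mapDomain_sub1_apply,
          Prod.ext_iff]
      have htt : ∀ i : ℕ, x0 (true, true, i) = l4 i := by
        intro i
        simp [hx0def, Finsupp.single_apply, mapDomain_emb_apply, mapDomain_sub1_apply,
          Prod.ext_iff]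
      have hker : x0 ∈ LinearMap.ker (sphDiff k) := by
        rw [LinearMap.mem_ker, mem_ker_iff]
        intro i
        rw [h0s (i + 1) (Nat.le_add_left 1 i)]
        have h2 := (f1 ⟨i + 1, Nat.le_add_left 1 i⟩).2
        rwa [LinearMap.mem_ker, LinearMap.lsmul_apply, smul_eq_mul] at h2
      refine ⟨⟨x0, hker⟩, ?_⟩
      simp only [LinearMap.prod_apply, Function.prod, LinearMap.comp_apply, Submodule.coe_subtype,
        Finsupp.lapply_apply, Prod.mk.injEq]
      refine ⟨h00, ?_, ?_, ?_, ?_⟩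
      · ext i
        show ((kerPart k ⟨x0, hker⟩) (eShift.symm i) : k) = (f1 i : k)
        rw [kerPart_apply]
        show x0 (false, false, i.1 - 1 + 1) = _
        rw [Nat.sub_add_cancel i.2, h0s i.1 i.2]
      · ext i; exact hft i
      · ext i; exact htf i
      · rw [← hl4]
        ext i
        show (Ideal.span {(2 : k)}).mkQ (x0 (true, true, i)) = _
        rw [htt i, Finsupp.mapRange_apply]
    · -- kernel = boundaries
      apply Submodule.ext
      intro x
      rw [LinearMap.mem_ker, Submodule.mem_comap]
      simp only [LinearMap.prod_apply, Function.prod, LinearMap.comp_apply, Submodule.coe_subtype,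
        Finsupp.lapply_apply, Prod.ext_iff, Prod.fst_zero, Prod.snd_zero]
      constructor
      · rintro ⟨h1, h2, h3, h4, h5⟩
        apply mem_range_sphDiff
        · intro g hg
          obtain ⟨a, b, i⟩ := g
          cases a
          · cases b
            · rcases Nat.eq_zero_or_pos i with rfl | hi
              · exact h1
              · have h2' := Finsupp.ext_iff.mp h2 ⟨i, hi⟩
                have h2'' := congrArg Subtype.val h2'
                have h2''' : (x : SphBasis →₀ k) (false, false, i - 1 + 1) = 0 := h2''
                rwa [Nat.sub_add_cancel hi] at h2'''
            · exact (Finsupp.ext_iff.mp h3 i)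
          · cases b
            · exact (Finsupp.ext_iff.mp h4 i)
            · simp at hg
        · intro i
          have := Finsupp.ext_iff.mp h5 i
          rw [Finsupp.mapRange.linearMap_apply] at this
          have : (Ideal.span {(2 : k)}).mkQ ((x : SphBasis →₀ k) (true, true, i)) = 0 := by
            simpa [Finsupp.mapRange_apply] using this
          rwa [Submodule.mkQ_apply, Submodule.Quotient.mk_eq_zero] at this
      · rintro ⟨w, hw⟩
        have hxw : (x : SphBasis →₀ k) = sphDiff k w := hw.symm
        refine ⟨?_, ?_, ?_, ?_, ?_⟩
        · rw [hxw]; exact sphDiff_ne _ _ (Or.inl rfl)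
        · ext i
          have hz : (x : SphBasis →₀ k) (false, false, i.1 - 1 + 1) = 0 := by
            rw [hxw]; exact sphDiff_ne _ _ (Or.inl rfl)
          exact hz
        · ext i
          simp only [projAB_apply, Finsupp.coe_zero, Pi.zero_apply]
          rw [hxw]; exact sphDiff_ne _ _ (Or.inl rfl)
        · ext i
          simp only [projAB_apply, Finsupp.coe_zero, Pi.zero_apply]
          rw [hxw]; exact sphDiff_ne _ _ (Or.inr rfl)
        · ext i
          simp only [Finsupp.mapRange.linearMap_apply, Finsupp.mapRange_apply,
            projAB_apply, Finsupp.coe_zero, Pi.zero_apply]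
          rw [hxw, sphDiff_tt, Submodule.mkQ_apply, Submodule.Quotient.mk_eq_zero]
          exact Ideal.mem_span_singleton'.mpr ⟨w (false, false, i + 1), mul_comm _ _⟩
  · -- products vanish when 2 is invertible
    intro h2 x y hx hy hx0 hy0
    have hxff : ∀ i, x (false, false, i) = 0 := by
      intro i
      cases i with
      | zero => exact hx0
      | succ i =>
        have := (mem_ker_iff x).mp hx i
        have h' := congrArg (fun t => ⅟(2 : k) * t) this
        simpa [← mul_assoc, invOf_mul_self] using h'
    have hyff : ∀ i, y (false, false, i) = 0 := by
      intro i
      cases i with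
      | zero => exact hy0
      | succ i =>
        have := (mem_ker_iff y).mp hy i
        have h' := congrArg (fun t => ⅟(2 : k) * t) this
        simpa [← mul_assoc, invOf_mul_self] using h'
    have hxs : ∀ g ∈ x.support, g.1 = true ∨ g.2.1 = true := by
      intro g hg
      obtain ⟨a, b, i⟩ := g
      cases a
      · cases b
        · exact absurd (hxff i) (Finsupp.mem_support_iff.mp hg)
        · exact Or.inr rfl
      · exact Or.inl rfl
    have hys : ∀ g ∈ y.support, g.1 = true ∨ g.2.1 = true := by
      intro g hg
      obtain ⟨a, b, i⟩ := g
      cases a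
      · cases b
        · exact absurd (hyff i) (Finsupp.mem_support_iff.mp hg)
        · exact Or.inr rfl
      · exact Or.inl rfl
    apply mem_range_sphDiff
    · intro g hg
      rw [sphMul, Finsupp.sum_apply, Finsupp.sum]
      apply Finset.sum_eq_zero
      intro g1 hg1
      rw [Finsupp.sum_apply, Finsupp.sum]
      apply Finset.sum_eq_zero
      intro g2 hg2
      rw [Finsupp.smul_apply]
      simp only [sphMulB]
      split_ifs with hcond
      · simp
      · have hne : ¬ (((g1.1 || g2.1, g1.2.1 || g2.2.1, g1.2.2 + g2.2.2) : SphBasis) = g) := by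
          intro hEq
          apply hcond
          rcases hg with hg | hg
          · have ha : (g1.1 || g2.1) = false := by
              rw [← hg]; exact congrArg (fun p : SphBasis => p.1) hEq
            rw [Bool.or_eq_false_iff] at ha
            have hb1 : g1.2.1 = true := (hxs g1 hg1).resolve_left (by simp [ha.1])
            have hb2 : g2.2.1 = true := (hys g2 hg2).resolve_left (by simp [ha.2])
            exact Or.inr ⟨hb1, hb2⟩
          · have hb : (g1.2.1 || g2.2.1) = false := by
              rw [← hg]; exact congrArg (fun p : SphBasis => p.2.1) hEq
            rw [Bool.or_eq_false_iff] at hb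
            have ha1 : g1.1 = true := (hxs g1 hg1).resolve_right (by simp [hb.1])
            have ha2 : g2.1 = true := (hys g2 hg2).resolve_right (by simp [hb.2])
            exact Or.inl ⟨ha1, ha2⟩
        rw [Finsupp.smul_apply, Finsupp.single_apply, if_neg hne, smul_zero, smul_zero]
    · intro i
      rw [Ideal.span_singleton_eq_top.mpr (isUnit_of_invertible (2 : k))]
      exact Submodule.mem_top
end
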